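/- For all nonnegative integers ℓ and all n ≥ 2, with ζ a primitive (n−1)-th root of unity, Cat_n(ζ^ℓ) = Cat_n(ζ^{2ℓ}), i.e., the q-Catalan polynomial takes the same value at ζ^ℓ and at its square. -/

import Mathlib

open scoped Classical

noncomputable def qInt {K : Type*} [Field K] (q : K) (n : ℕ) : K :=
  ∑ i ∈ Finset.range n, q ^ i

noncomputable def qFact {K : Type*} [Field K] (q : K) (n : ℕ) : K :=
  ∏ i ∈ Finset.range n, qInt q (i + 1)

noncomputable def qBinom {K : Type*} [Field K] (q : K) (n k : ℕ) : K :=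
  qFact q n / (qFact q k * qFact q (n - k))

noncomputable def qCat {K : Type*} [Field K] (q : K) (n : ℕ) : K :=
  qBinom q (2 * n) n / qInt q (n + 1)

/-! Clearing denominators, `P · ([n]_q!)² · [n+1]_q = [2n]_q!` in `ℚ[q]`. Since
`[d t]_q = [d]_q · [t]_{q^d}`, the `q`-factorial `[N]_q!` is `[d]_q ^ ⌊N/d⌋` times a polynomial
whose value at a primitive `d`-th root of unity `ω` is `⌊N/d⌋! · ([d-1]_ω!)^⌊N/d⌋ · [N mod d]_ω!`
(a `q`-Lucas formula). For `n = d m + 1` and `d ≥ 3` the powers of `[d]_q` cancel and we get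
`P(ω) = binom(2m, m)`, which depends only on the order `d` of `ω`. Finally, as `n - 1` is odd, the
order of `ζ^ℓ` is odd, so squaring `ζ^ℓ` does not change it. -/

open Polynomial Finset

section QPolynomial

variable (R : Type*) [CommSemiring R]

noncomputable def qIntPoly (k : ℕ) : R[X] :=
  ∑ i ∈ range k, X ^ i

noncomputable def qFactPoly (N : ℕ) : R[X] :=
  ∏ i ∈ range N, qIntPoly R (i + 1)

noncomputable def qFactPolyReduced (d N : ℕ) : R[X] :=
  ∏ i ∈ range N,
    if d ∣ i + 1 then expand R d (qIntPoly R ((i + 1) / d)) else qIntPoly R (i + 1)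

variable {R}

theorem qIntPoly_monic [Nontrivial R] {k : ℕ} (hk : k ≠ 0) : (qIntPoly R k).Monic :=
  monic_geom_sum_X hk

theorem qFactPoly_monic [Nontrivial R] (N : ℕ) : (qFactPoly R N).Monic :=
  monic_prod_of_monic _ _ fun _ _ => qIntPoly_monic (Nat.succ_ne_zero _)

theorem qIntPoly_add (a b : ℕ) : qIntPoly R (a + b) = qIntPoly R a + X ^ a * qIntPoly R b := by
  simp only [qIntPoly, sum_range_add, mul_sum, pow_add]

theorem qIntPoly_mul (d t : ℕ) :
    qIntPoly R (d * t) = qIntPoly R d * expand R d (qIntPoly R t) := by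
  induction t with
  | zero => simp [qIntPoly]
  | succ t ih =>
    rw [Nat.mul_succ, qIntPoly_add, ih, qIntPoly_add, map_add, map_mul, map_pow, expand_X]
    simp only [qIntPoly, range_one, sum_singleton, pow_zero, map_one, pow_mul]
    ring

theorem qFactPoly_succ (N : ℕ) : qFactPoly R (N + 1) = qFactPoly R N * qIntPoly R (N + 1) :=
  prod_range_succ _ _

theorem qFactPolyReduced_succ (d N : ℕ) :
    qFactPolyReduced R d (N + 1) = qFactPolyReduced R d N *
      if d ∣ N + 1 then expand R d (qIntPoly R ((N + 1) / d)) else qIntPoly R (N + 1) :=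
  prod_range_succ _ _

theorem qFactPoly_eq_qIntPoly_pow_mul (d N : ℕ) :
    qFactPoly R N = qIntPoly R d ^ (N / d) * qFactPolyReduced R d N := by
  induction N with
  | zero => simp [qFactPoly, qFactPolyReduced]
  | succ N ih =>
    rw [qFactPoly_succ, qFactPolyReduced_succ, ih]
    by_cases h : d ∣ N + 1
    · have hsplit :
          qIntPoly R (N + 1) = qIntPoly R d * expand R d (qIntPoly R (N / d + 1)) := by
        rw [← Nat.succ_div_of_dvd h, ← qIntPoly_mul, Nat.mul_div_cancel' h]
      rw [if_pos h, Nat.succ_div_of_dvd h, hsplit]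
      ring
    · rw [if_neg h, Nat.succ_div_of_not_dvd h]
      ring

theorem aeval_qIntPoly {L : Type*} [Field L] [Algebra R L] (x : L) (k : ℕ) :
    aeval x (qIntPoly R k) = qInt x k := by
  simp [qIntPoly, qInt]

end QPolynomial

section RatFunc

variable {K : Type*} [Field K]

theorem algebraMap_qIntPoly (k : ℕ) :
    algebraMap K[X] (RatFunc K) (qIntPoly K k) = qInt RatFunc.X k := by
  simp [qIntPoly, qInt, RatFunc.algebraMap_X]

theorem algebraMap_qFactPoly (N : ℕ) :
    algebraMap K[X] (RatFunc K) (qFactPoly K N) = qFact RatFunc.X N := by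
  simp [qFactPoly, qFact, algebraMap_qIntPoly]

theorem mul_qFactPoly_eq_of_algebraMap_eq_qCat {n : ℕ} {P : K[X]}
    (hP : algebraMap K[X] (RatFunc K) P = qCat RatFunc.X n) :
    P * (qFactPoly K n ^ 2 * qIntPoly K (n + 1)) = qFactPoly K (2 * n) := by
  have hinj := RatFunc.algebraMap_injective K
  have hfact : qFact (RatFunc.X : RatFunc K) n ≠ 0 := by
    rw [← algebraMap_qFactPoly, map_ne_zero_iff _ hinj]
    exact (qFactPoly_monic n).ne_zero
  have hint : qInt (RatFunc.X : RatFunc K) (n + 1) ≠ 0 := by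
    rw [← algebraMap_qIntPoly, map_ne_zero_iff _ hinj]
    exact (qIntPoly_monic n.succ_ne_zero).ne_zero
  apply hinj
  rw [map_mul, map_mul, map_pow, hP, algebraMap_qFactPoly, algebraMap_qFactPoly,
    algebraMap_qIntPoly, qCat, qBinom, show 2 * n - n = n by omega]
  field_simp

end RatFunc

section RootOfUnity

variable {L : Type*} [Field L] {ω : L} {d : ℕ}

theorem qFact_succ (q : L) (N : ℕ) : qFact q (N + 1) = qFact q N * qInt q (N + 1) :=
  prod_range_succ _ _

theorem qInt_one (k : ℕ) : qInt (1 : L) k = k := by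
  simp [qInt]

theorem IsPrimitiveRoot.qInt_mod (hω : IsPrimitiveRoot ω d) (hd : 2 ≤ d) (k : ℕ) :
    qInt ω (k % d) = qInt ω k := by
  have hω1 : ω ≠ 1 := hω.ne_one hd
  rw [qInt, qInt, geom_sum_eq hω1, geom_sum_eq hω1, hω.eq_orderOf, pow_mod_orderOf]

theorem IsPrimitiveRoot.qInt_ne_zero (hω : IsPrimitiveRoot ω d) {k : ℕ} (hk : 0 < k)
    (hkd : k < d) : qInt ω k ≠ 0 := by
  have hω1 : ω ≠ 1 := hω.ne_one (by omega)
  rw [qInt, geom_sum_eq hω1]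
  exact div_ne_zero (sub_ne_zero.mpr (hω.pow_ne_one_of_pos_of_lt hk.ne' hkd))
    (sub_ne_zero.mpr hω1)

theorem IsPrimitiveRoot.qFact_ne_zero (hω : IsPrimitiveRoot ω d) {N : ℕ} (hN : N < d) :
    qFact ω N ≠ 0 :=
  prod_ne_zero_iff.mpr fun i hi => hω.qInt_ne_zero i.succ_pos (by simp at hi; omega)

theorem IsPrimitiveRoot.aeval_qFactPolyReduced {R : Type*} [CommSemiring R] [Algebra R L]
    (hω : IsPrimitiveRoot ω d) (hd : 2 ≤ d) (N : ℕ) :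
    aeval ω (qFactPolyReduced R d N) =
      (N / d).factorial * qFact ω (d - 1) ^ (N / d) * qFact ω (N % d) := by
  induction N with
  | zero => simp [qFactPolyReduced, qFact]
  | succ N ih =>
    have hdiv := Nat.mod_add_div N d
    have hdiv' := Nat.mod_add_div (N + 1) d
    have hmod := Nat.mod_lt N (show 0 < d by omega)
    rw [qFactPolyReduced_succ, map_mul, ih]
    by_cases h : d ∣ N + 1
    · have hq := Nat.succ_div_of_dvd h
      have hr := Nat.mod_eq_zero_of_dvd h
      rw [hq, Nat.mul_succ] at hdiv'
      rw [if_pos h, expand_aeval, hω.pow_eq_one, aeval_qIntPoly, qInt_one, hq, hr,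
        show N % d = d - 1 by omega, Nat.factorial_succ]
      simp only [qFact, range_zero, prod_empty]
      push_cast
      ring
    · have hq := Nat.succ_div_of_not_dvd h
      rw [hq] at hdiv'
      rw [if_neg h, aeval_qIntPoly, ← hω.qInt_mod hd, hq,
        show (N + 1) % d = N % d + 1 by omega, qFact_succ]
      ring

end RootOfUnity

section Catalan

variable {K L : Type*} [Field K] [Field L] [Algebra K L] {ω : L} {d : ℕ}

theorem IsPrimitiveRoot.aeval_qFactPolyReduced_mul_add (hω : IsPrimitiveRoot ω d) (hd : 2 ≤ d)
    {r : ℕ} (hr : r < d) (q : ℕ) :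
    aeval ω (qFactPolyReduced K d (d * q + r)) =
      q.factorial * qFact ω (d - 1) ^ q * qFact ω r := by
  rw [hω.aeval_qFactPolyReduced hd, Nat.mul_add_div (by omega), Nat.div_eq_of_lt hr,
    Nat.mul_add_mod, Nat.mod_eq_of_lt hr, add_zero]

theorem IsPrimitiveRoot.aeval_eq_centralBinom [CharZero L] {P : K[X]} {n m : ℕ}
    (hP : P * (qFactPoly K n ^ 2 * qIntPoly K (n + 1)) = qFactPoly K (2 * n))
    (hω : IsPrimitiveRoot ω d) (hd : 3 ≤ d) (hn : n = d * m + 1) :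
    aeval ω P = m.centralBinom := by
  have hn2 : 2 * n = d * (2 * m) + 2 := by rw [hn]; ring
  have hreduced : P * (qFactPolyReduced K d n ^ 2 * qIntPoly K (n + 1)) =
      qFactPolyReduced K d (2 * n) := by
    have hdm : n / d = m := by
      rw [hn, Nat.mul_add_div (by omega), Nat.div_eq_of_lt (by omega), add_zero]
    have hdm2 : 2 * n / d = 2 * m := by
      rw [hn2, Nat.mul_add_div (by omega), Nat.div_eq_of_lt (by omega), add_zero]
    rw [qFactPoly_eq_qIntPoly_pow_mul d, qFactPoly_eq_qIntPoly_pow_mul d, hdm, hdm2] at hP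
    have hd0 : qIntPoly K d ≠ 0 := (qIntPoly_monic (by omega)).ne_zero
    refine mul_left_cancel₀ (pow_ne_zero (2 * m) hd0) ?_
    rw [← hP]
    ring
  have hval := congrArg (aeval ω) hreduced
  rw [map_mul, map_mul, map_pow, aeval_qIntPoly, hn2, hn, add_assoc,
    hω.aeval_qFactPolyReduced_mul_add (by omega) (by omega),
    hω.aeval_qFactPolyReduced_mul_add (by omega) (by omega),
    ← hω.qInt_mod (by omega), Nat.mul_add_mod, Nat.mod_eq_of_lt (by omega)] at hval
  have hF : qFact ω (d - 1) ≠ 0 := hω.qFact_ne_zero (by omega)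
  have hint2 : qInt ω 2 ≠ 0 := hω.qInt_ne_zero (by omega) (by omega)
  have hcentral : ((2 * m).factorial : L) = m.centralBinom * m.factorial * m.factorial := by
    rw [Nat.centralBinom_eq_two_mul_choose, two_mul]
    exact_mod_cast (Nat.add_choose_mul_factorial_mul_factorial m m).symm
  have hfact1 : qFact ω 1 = 1 := by simp [qFact, qInt]
  have hfact2 : qFact ω 2 = qInt ω 2 := by simp [qFact, qInt, prod_range_succ]
  rw [hfact1, hfact2, hcentral] at hval
  have hm : (m.factorial : L) ≠ 0 := Nat.cast_ne_zero.mpr m.factorial_ne_zero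
  have hne : ((m.factorial : L) * qFact ω (d - 1) ^ m) ^ 2 * qInt ω 2 ≠ 0 :=
    mul_ne_zero (pow_ne_zero _ (mul_ne_zero hm (pow_ne_zero _ hF))) hint2
  refine mul_right_cancel₀ hne ?_
  linear_combination hval

theorem aeval_eq_of_isPrimitiveRoot [CharZero L] {P : K[X]} {n : ℕ} {ω' : L}
    (hP : P * (qFactPoly K n ^ 2 * qIntPoly K (n + 1)) = qFactPoly K (2 * n))
    (hω : IsPrimitiveRoot ω d) (hω' : IsPrimitiveRoot ω' d) (hn : n ≠ 0) (hdn : d ∣ n - 1)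
    (hd : Odd d) : aeval ω P = aeval ω' P := by
  obtain ⟨m, hm⟩ := hdn
  obtain ⟨k, rfl⟩ := hd
  rcases k.eq_zero_or_pos with rfl | hk
  · rw [mul_zero, zero_add, IsPrimitiveRoot.one_right_iff] at hω hω'
    rw [hω, hω']
  · have hnm : n = (2 * k + 1) * m + 1 := by omega
    rw [hω.aeval_eq_centralBinom hP (by omega) hnm, hω'.aeval_eq_centralBinom hP (by omega) hnm]

end Catalan

theorem qCatalan_power_eq_square (n l : ℕ) (hn : 2 ≤ n) (hne : Even n)
    (ζ : ℂ) (hζ : IsPrimitiveRoot ζ (n - 1))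
    (P : Polynomial ℚ)
    (hP : algebraMap (Polynomial ℚ) (RatFunc ℚ) P = qCat (RatFunc.X : RatFunc ℚ) n) :
    Polynomial.aeval (ζ ^ l) P = Polynomial.aeval (ζ ^ (2 * l)) P := by
  have hodd : Odd (n - 1) := Nat.Even.sub_odd (by omega) hne odd_one
  have hdvd : orderOf (ζ ^ l) ∣ n - 1 :=
    orderOf_dvd_of_pow_eq_one (by rw [← pow_mul, mul_comm, pow_mul, hζ.pow_eq_one, one_pow])
  have horder : orderOf ((ζ ^ l) ^ 2) = orderOf (ζ ^ l) :=
    Nat.Coprime.orderOf_pow (Nat.Coprime.coprime_dvd_left hdvd (Nat.coprime_two_right.mpr hodd))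
  rw [mul_comm, pow_mul]
  exact aeval_eq_of_isPrimitiveRoot (mul_qFactPoly_eq_of_algebraMap_eq_qCat hP)
    (IsPrimitiveRoot.orderOf _) (horder ▸ IsPrimitiveRoot.orderOf _) (by omega) hdvd
    (hodd.of_dvd_nat hdvd)
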